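/- Define A, B, C, D : ℝ⁴ → ℝ as the 2-HEA amplitudes A := cos t₀ cos t₂ cos(t₁+t₃) − sin t₀ sin t₂ sin(t₁−t₃), B := cos t₀ cos t₂ sin(t₁+t₃) − sin t₀ sin t₂ cos(t₁−t₃), C := cos t₀ sin t₂ cos(t₁+t₃) + sin t₀ cos t₂ sin(t₁−t₃), D := sin t₀ cos t₂ cos(t₁−t₃) + cos t₀ sin t₂ sin(t₁+t₃); set x := A² + B², z := −(A·C + B·D), 𝒞 := 2√(x(1−x) − z²), and define the 4×4 matrix-valued function F with entries F_{ij} := 4·∂_i x·∂_j x + 4·∂_i z·∂_j z + ∂_i 𝒞·∂_j 𝒞 (partial derivatives in the parameters (t₀,t₁,t₂,t₃)). Then at the point θ* := (π/4, 0, π/4, 0): x(θ*) = 1/2 and z(θ*) = 0 (so the reduced state is ρ_A(θ*) = I/2), F(θ*) = diag(4, 4, 0, 0), and det F(θ*) = 0. -/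

import Mathlib

/-- Partial derivative of a real-valued map on `ℝ⁴` in the `i`-th coordinate direction. -/
noncomputable def pderiv4 (f : (Fin 4 → ℝ) → ℝ) (θ : Fin 4 → ℝ) (i : Fin 4) : ℝ :=
  fderiv ℝ f θ (Pi.single i 1)

/-- 2-HEA amplitudes. -/
noncomputable def heaA (t : Fin 4 → ℝ) : ℝ :=
  Real.cos (t 0) * Real.cos (t 2) * Real.cos (t 1 + t 3)
    - Real.sin (t 0) * Real.sin (t 2) * Real.sin (t 1 - t 3)

noncomputable def heaB (t : Fin 4 → ℝ) : ℝ :=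
  Real.cos (t 0) * Real.cos (t 2) * Real.sin (t 1 + t 3)
    - Real.sin (t 0) * Real.sin (t 2) * Real.cos (t 1 - t 3)

noncomputable def heaC (t : Fin 4 → ℝ) : ℝ :=
  Real.cos (t 0) * Real.sin (t 2) * Real.cos (t 1 + t 3)
    + Real.sin (t 0) * Real.cos (t 2) * Real.sin (t 1 - t 3)

noncomputable def heaD (t : Fin 4 → ℝ) : ℝ :=
  Real.sin (t 0) * Real.cos (t 2) * Real.cos (t 1 - t 3)
    + Real.cos (t 0) * Real.sin (t 2) * Real.sin (t 1 + t 3)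

/-- Reduced-state population `x = A² + B²`. -/
noncomputable def heaX (t : Fin 4 → ℝ) : ℝ := heaA t ^ 2 + heaB t ^ 2

/-- Reduced-state coherence `z = −(AC + BD)` (real for the 2-HEA). -/
noncomputable def heaZ (t : Fin 4 → ℝ) : ℝ := -(heaA t * heaC t + heaB t * heaD t)

/-- Concurrence `𝒞 = 2√(x(1−x) − z²)`. -/
noncomputable def heaConc (t : Fin 4 → ℝ) : ℝ :=
  2 * Real.sqrt (heaX t * (1 - heaX t) - heaZ t ^ 2)

/-- Three-channel SLD quantum Fisher information matrix of the 2-HEA on parameter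
space: `F_{ij} = 4 ∂_i x ∂_j x + 4 ∂_i z ∂_j z + ∂_i 𝒞 ∂_j 𝒞`. -/
noncomputable def heaQFIM (θ : Fin 4 → ℝ) : Matrix (Fin 4) (Fin 4) ℝ :=
  Matrix.of fun i j =>
    4 * pderiv4 heaX θ i * pderiv4 heaX θ j
      + 4 * pderiv4 heaZ θ i * pderiv4 heaZ θ j
      + pderiv4 heaConc θ i * pderiv4 heaConc θ j

/-!
In double angles the reduced state of the 2-HEA reads
`x = (1 + cos 2t₀ cos 2t₂ - sin 2t₀ sin 2t₂ sin 2t₁) / 2` and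
`z = -(cos 2t₀ sin 2t₂ + sin 2t₀ cos 2t₂ sin 2t₁) / 2`; the phase `t₃` drops out of `ρ_A`.
At `θ*` we have `2t₀ = 2t₂ = π/2` and `t₁ = 0`, so `x = 1/2`, `z = 0`, `∇x = -e₁` and `∇z = e₀`.
Since `x(1 - x) - z² ≤ 1/4`, the concurrence is at most `1`; it equals `1` at `θ*`, so `θ*` is a
maximum of `𝒞` and `∇𝒞(θ*) = 0` by Fermat. Hence `F(θ*) = 4 e₀e₀ᵀ + 4 e₁e₁ᵀ`.
-/

open Real

theorem sin_two_mul_eq_sin_add_add_sub (a b : ℝ) :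
    sin (2 * a) = sin (a + b) * cos (a - b) + cos (a + b) * sin (a - b) := by
  rw [← sin_add, add_add_sub_cancel, two_mul]

theorem heaX_eq (t : Fin 4 → ℝ) :
    heaX t =
      (1 + cos (2 * t 0) * cos (2 * t 2) - sin (2 * t 0) * sin (2 * t 2) * sin (2 * t 1)) / 2 := by
  rw [heaX, heaA, heaB, sin_two_mul_eq_sin_add_add_sub (t 1) (t 3), cos_two_mul', cos_two_mul',
    sin_two_mul, sin_two_mul]
  linear_combination (cos (t 0) * cos (t 2)) ^ 2 * sin_sq_add_cos_sq (t 1 + t 3)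
    + (sin (t 0) * sin (t 2)) ^ 2 * sin_sq_add_cos_sq (t 1 - t 3)
    + (sin (t 2) ^ 2 + cos (t 2) ^ 2) / 2 * sin_sq_add_cos_sq (t 0)
    + sin_sq_add_cos_sq (t 2) / 2

theorem heaZ_eq (t : Fin 4 → ℝ) :
    heaZ t =
      -(cos (2 * t 0) * sin (2 * t 2) + sin (2 * t 0) * cos (2 * t 2) * sin (2 * t 1)) / 2 := by
  rw [heaZ, heaA, heaB, heaC, heaD, sin_two_mul_eq_sin_add_add_sub (t 1) (t 3), cos_two_mul',
    cos_two_mul', sin_two_mul, sin_two_mul]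
  linear_combination -(cos (t 0) ^ 2 * cos (t 2) * sin (t 2)) * sin_sq_add_cos_sq (t 1 + t 3)
    + sin (t 0) ^ 2 * cos (t 2) * sin (t 2) * sin_sq_add_cos_sq (t 1 - t 3)

theorem hasFDerivAt_two_mul_apply {ι : Type*} [Fintype ι] (i : ι) (θ : ι → ℝ) :
    HasFDerivAt (fun t : ι → ℝ => 2 * t i) ((2 : ℝ) • ContinuousLinearMap.proj (R := ℝ) i) θ :=
  (hasFDerivAt_apply i θ).const_mul 2

noncomputable def heaStar : Fin 4 → ℝ := ![π / 4, 0, π / 4, 0]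

theorem two_mul_heaStar : 2 * heaStar 0 = π / 2 ∧ 2 * heaStar 1 = 0 ∧ 2 * heaStar 2 = π / 2 := by
  refine ⟨?_, ?_, ?_⟩ <;> simp only [heaStar, Matrix.cons_val] <;> ring

theorem heaX_heaStar : heaX heaStar = 1 / 2 := by
  obtain ⟨h0, h1, h2⟩ := two_mul_heaStar
  rw [heaX_eq, h0, h1, h2]; norm_num

theorem heaZ_heaStar : heaZ heaStar = 0 := by
  obtain ⟨h0, h1, h2⟩ := two_mul_heaStar
  rw [heaZ_eq, h0, h1, h2]; norm_num

theorem pderiv4_heaX_heaStar : pderiv4 heaX heaStar = ![0, -1, 0, 0] := by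
  have d (i : Fin 4) := hasFDerivAt_two_mul_apply i heaStar
  have h := (((hasFDerivAt_const (𝕜 := ℝ) (1 : ℝ) heaStar).add ((d 0).cos.mul (d 2).cos)).sub
      (((d 0).sin.mul (d 2).sin).mul (d 1).sin)).const_mul (2⁻¹ : ℝ)
  simp only [Pi.add_apply, Pi.sub_apply, Pi.mul_apply, inv_mul_eq_div, ← heaX_eq] at h
  obtain ⟨h0, h1, h2⟩ := two_mul_heaStar
  funext i
  rw [pderiv4, h.fderiv, h0, h1, h2]
  fin_cases i <;> simp

theorem pderiv4_heaZ_heaStar : pderiv4 heaZ heaStar = ![1, 0, 0, 0] := by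
  have d (i : Fin 4) := hasFDerivAt_two_mul_apply i heaStar
  have h := (((d 0).cos.mul (d 2).sin).add (((d 0).sin.mul (d 2).cos).mul (d 1).sin)).neg.const_mul
    (2⁻¹ : ℝ)
  simp only [Pi.add_apply, Pi.neg_apply, Pi.mul_apply, inv_mul_eq_div, ← heaZ_eq] at h
  obtain ⟨h0, h1, h2⟩ := two_mul_heaStar
  funext i
  rw [pderiv4, h.fderiv, h0, h1, h2]
  fin_cases i <;> simp

theorem two_mul_sqrt_mul_one_sub_sub_sq_le_one (x z : ℝ) : 2 * √(x * (1 - x) - z ^ 2) ≤ 1 := by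
  have h : x * (1 - x) - z ^ 2 ≤ (1 / 2) ^ 2 := by nlinarith [sq_nonneg (x - 1 / 2), sq_nonneg z]
  calc 2 * √(x * (1 - x) - z ^ 2) ≤ 2 * √((1 / 2) ^ 2) := by gcongr
    _ = 1 := by rw [sqrt_sq (by norm_num)]; norm_num

theorem heaConc_heaStar : heaConc heaStar = 1 := by
  rw [heaConc, heaX_heaStar, heaZ_heaStar,
    show (1 / 2 : ℝ) * (1 - 1 / 2) - 0 ^ 2 = (1 / 2) ^ 2 by norm_num, sqrt_sq (by norm_num)]
  norm_num

theorem heaConc_le_heaConc_heaStar (t : Fin 4 → ℝ) : heaConc t ≤ heaConc heaStar :=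
  heaConc_heaStar ▸ two_mul_sqrt_mul_one_sub_sub_sq_le_one _ _

theorem pderiv4_heaConc_heaStar : pderiv4 heaConc heaStar = 0 := by
  have hmax : IsLocalMax heaConc heaStar := Filter.Eventually.of_forall heaConc_le_heaConc_heaStar
  funext i
  rw [pderiv4, hmax.fderiv_eq_zero]
  rfl

theorem heaQFIM_heaStar : heaQFIM heaStar = Matrix.diagonal ![4, 4, 0, 0] := by
  ext i j
  simp only [heaQFIM, Matrix.of_apply, pderiv4_heaX_heaStar, pderiv4_heaZ_heaStar,
    pderiv4_heaConc_heaStar, Pi.zero_apply]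
  fin_cases i <;> fin_cases j <;> norm_num

/-- A concrete singular point of the 2-HEA: at `θ* = (π/4, 0, π/4, 0)` the reduced
state is `ρ_A = I/2`, and the QFIM degenerates to `diag(4, 4, 0, 0)` with
`det F(θ*) = 0`. -/
theorem hea_singular_point :
    let θs : Fin 4 → ℝ := ![Real.pi / 4, 0, Real.pi / 4, 0]
    heaX θs = 1 / 2 ∧ heaZ θs = 0 ∧
    (!![heaX θs, heaZ θs; heaZ θs, 1 - heaX θs] : Matrix (Fin 2) (Fin 2) ℝ)
      = (1 / 2 : ℝ) • (1 : Matrix (Fin 2) (Fin 2) ℝ) ∧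
    heaQFIM θs = Matrix.diagonal ![4, 4, 0, 0] ∧
    (heaQFIM θs).det = 0 := by
  intro θs
  have hx : heaX θs = 1 / 2 := heaX_heaStar
  have hz : heaZ θs = 0 := heaZ_heaStar
  have hF : heaQFIM θs = Matrix.diagonal ![4, 4, 0, 0] := heaQFIM_heaStar
  refine ⟨hx, hz, ?_, hF, ?_⟩
  · rw [hx, hz]
    ext i j
    fin_cases i <;> fin_cases j <;> norm_num
  · simp [hF, Matrix.det_diagonal, Fin.prod_univ_four]
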